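/- Let F be an induced-2C2-saturated family of subsets of [n] with C♭ ⊆ F, let i ∈ {1,…,n−1} with S_i ∉ F, and suppose there exist A, B, D ∈ F \ C♭ such that B ⊊ A, D is comparable to S_i, and each of A, B is incomparable to each of D, S_i. Then for each W ∈ {A, B, D}, the family F ∪ {S_i} contains an induced copy of 2C2 whose four sets include both W and S_i and also include some element of C♭ (namely C_i, or C_j for some j ∈ {i−1, i+1}). -/

import Mathlib

/-- `F ⊆ 𝒫([n])` contains an induced copy of the poset `2C₂`: four sets
`A ⊊ A'`, `B ⊊ B'`, with each of `A, A'` incomparable to each of `B, B'`. -/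
def Contains2C2 {n : ℕ} (F : Finset (Finset (Fin n))) : Prop :=
  ∃ A A' B B' : Finset (Fin n), A ∈ F ∧ A' ∈ F ∧ B ∈ F ∧ B' ∈ F ∧
    A ⊂ A' ∧ B ⊂ B' ∧
    ¬ A ⊆ B ∧ ¬ B ⊆ A ∧ ¬ A ⊆ B' ∧ ¬ B' ⊆ A ∧
    ¬ A' ⊆ B ∧ ¬ B ⊆ A' ∧ ¬ A' ⊆ B' ∧ ¬ B' ⊆ A'

/-- `F` is induced-`2C₂`-saturated: it is induced-`2C₂`-free, and adding any
missing set creates an induced copy of `2C₂`. -/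
def Saturated2C2 {n : ℕ} (F : Finset (Finset (Fin n))) : Prop :=
  ¬ Contains2C2 F ∧ ∀ S : Finset (Fin n), S ∉ F → Contains2C2 (insert S F)

/-- The chain element `C_i = [i] = {1,…,i}` (0-indexed: `{x : Fin n | x < i}`). -/
def chainC (n i : ℕ) : Finset (Fin n) := Finset.univ.filter (fun x => (x : ℕ) < i)

/-- The maximal chain `C♭ = {C_0, C_1, …, C_n}`. -/
def Cflat (n : ℕ) : Finset (Finset (Fin n)) := (Finset.range (n + 1)).image (chainC n)

/-- The shackle `S_i = [i-1] ∪ {i+1}` (1-indexed elements; 0-indexed: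
`{x : Fin n | x + 1 < i or x = i}`), meaningful for `1 ≤ i ≤ n-1`. -/
def shackle (n i : ℕ) : Finset (Fin n) :=
  Finset.univ.filter (fun x => (x : ℕ) + 1 < i ∨ (x : ℕ) = i)

/-- Two sets are comparable if one contains the other. -/
def Comp {n : ℕ} (A B : Finset (Fin n)) : Prop := A ⊆ B ∨ B ⊆ A

/-- Two sets are incomparable if neither contains the other. -/
def Incomp {n : ℕ} (A B : Finset (Fin n)) : Prop := ¬ A ⊆ B ∧ ¬ B ⊆ A


lemma mem_chainC {n j : ℕ} {x : Fin n} : x ∈ chainC n j ↔ (x : ℕ) < j := by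
  simp [chainC]

lemma mem_shackle {n i : ℕ} {x : Fin n} : x ∈ shackle n i ↔ (x : ℕ) + 1 < i ∨ (x : ℕ) = i := by
  simp [shackle]

lemma chainC_mem_Cflat (n j : ℕ) (h : j ≤ n) : chainC n j ∈ Cflat n :=
  Finset.mem_image.2 ⟨j, Finset.mem_range.2 (by omega), rfl⟩

/-- If a missing shackle `S_i` is witnessed in a Case-3 fashion by `A, B, D`,
then each of `A, B, D` is part of an induced copy of `2C₂` in `F ∪ {S_i}`
that also contains `S_i` and some chain element `C_i`, `C_{i-1}` or `C_{i+1}`. -/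
theorem case_three_superfluous (n : ℕ)
    (F : Finset (Finset (Fin n))) (hF : Saturated2C2 F) (hC : Cflat n ⊆ F)
    (i : ℕ) (hi1 : 1 ≤ i) (hin : i + 1 ≤ n) (hSi : shackle n i ∉ F)
    (A B D : Finset (Fin n))
    (hA : A ∈ F) (hA' : A ∉ Cflat n) (hB : B ∈ F) (hB' : B ∉ Cflat n)
    (hD : D ∈ F) (hD' : D ∉ Cflat n)
    (hBA : B ⊂ A) (hDS : Comp D (shackle n i))
    (h1 : Incomp A D) (h2 : Incomp A (shackle n i))
    (h3 : Incomp B D) (h4 : Incomp B (shackle n i)) :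
    ∀ W ∈ ({A, B, D} : Finset (Finset (Fin n))),
      ∃ X X' Y Y' : Finset (Fin n),
        X ∈ insert (shackle n i) F ∧ X' ∈ insert (shackle n i) F ∧
        Y ∈ insert (shackle n i) F ∧ Y' ∈ insert (shackle n i) F ∧
        X ⊂ X' ∧ Y ⊂ Y' ∧
        ¬ X ⊆ Y ∧ ¬ Y ⊆ X ∧ ¬ X ⊆ Y' ∧ ¬ Y' ⊆ X ∧
        ¬ X' ⊆ Y ∧ ¬ Y ⊆ X' ∧ ¬ X' ⊆ Y' ∧ ¬ Y' ⊆ X' ∧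
        W ∈ ({X, X', Y, Y'} : Finset (Finset (Fin n))) ∧
        shackle n i ∈ ({X, X', Y, Y'} : Finset (Finset (Fin n))) ∧
        (∃ j : ℕ, (j = i ∨ j + 1 = i ∨ j = i + 1) ∧
          chainC n j ∈ ({X, X', Y, Y'} : Finset (Finset (Fin n)))) := by
  classical
  -- abbreviations
  set S := shackle n i with hSdef
  set Cm := chainC n (i-1) with hCmdef
  set Ci := chainC n i with hCidef
  set Cp := chainC n (i+1) with hCpdef
  obtain ⟨h1a, h1b⟩ := h1
  obtain ⟨h2a, h2b⟩ := h2
  obtain ⟨h3a, h3b⟩ := h3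
  obtain ⟨h4a, h4b⟩ := h4
  have hfree := hF.1
  -- distinguished elements
  have hiN : i < n := by omega
  have fi : Fin n := ⟨i, hiN⟩
  -- memberships in F
  have hCmF : Cm ∈ F := hC (chainC_mem_Cflat n (i-1) (by omega))
  have hCiF : Ci ∈ F := hC (chainC_mem_Cflat n i (by omega))
  have hCpF : Cp ∈ F := hC (chainC_mem_Cflat n (i+1) (by omega))
  have hAne : ∀ j, j ≤ n → A ≠ chainC n j := fun j hj h => hA' (by rw [h]; exact chainC_mem_Cflat n j hj)
  have hBne : ∀ j, j ≤ n → B ≠ chainC n j := fun j hj h => hB' (by rw [h]; exact chainC_mem_Cflat n j hj)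
  have hDne : ∀ j, j ≤ n → D ≠ chainC n j := fun j hj h => hD' (by rw [h]; exact chainC_mem_Cflat n j hj)
  have hDneS : D ≠ S := fun h => hSi (h ▸ hD)
  -- element facts
  have hfiS : (⟨i, hiN⟩ : Fin n) ∈ S := mem_shackle.2 (Or.inr rfl)
  have hfimCi : (⟨i-1, by omega⟩ : Fin n) ∈ Ci := mem_chainC.2 (by simp; omega)
  have hfimCp : (⟨i-1, by omega⟩ : Fin n) ∈ Cp := mem_chainC.2 (by simp)
  have hfiCp : (⟨i, hiN⟩ : Fin n) ∈ Cp := mem_chainC.2 (by simp)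
  have hfimnotS : (⟨i-1, by omega⟩ : Fin n) ∉ S := by rw [hSdef, mem_shackle]; simp; omega
  have hfinotCi : (⟨i, hiN⟩ : Fin n) ∉ Ci := by rw [hCidef, mem_chainC]; simp
  have hfinotCm : (⟨i, hiN⟩ : Fin n) ∉ Cm := by rw [hCmdef, mem_chainC]; simp
  have hfimnotCm : (⟨i-1, by omega⟩ : Fin n) ∉ Cm := by rw [hCmdef, mem_chainC]; simp
  -- basic subsets
  have hCmS : Cm ⊆ S := by intro x hx; rw [hCmdef, mem_chainC] at hx; rw [hSdef, mem_shackle]; omega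
  have hSCp : S ⊆ Cp := by intro x hx; rw [hSdef, mem_shackle] at hx; rw [hCpdef, mem_chainC]; omega
  have hCmCi : Cm ⊆ Ci := by intro x hx; rw [hCmdef, mem_chainC] at hx; rw [hCidef, mem_chainC]; omega
  have hCiCp : Ci ⊆ Cp := by intro x hx; rw [hCidef, mem_chainC] at hx; rw [hCpdef, mem_chainC]; omega
  have hCmSs : Cm ⊂ S := hCmS.ssubset_of_ne (fun h => hfinotCm (h ▸ hfiS))
  have hSCps : S ⊂ Cp := hSCp.ssubset_of_ne (fun h => hfimnotS (h ▸ hfimCp))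
  have hCiCps : Ci ⊂ Cp := hCiCp.ssubset_of_ne (fun h => hfinotCi (h ▸ hfiCp))
  -- basic incomparabilities
  have nCiS : ¬ Ci ⊆ S := fun h => hfimnotS (h hfimCi)
  have nSCi : ¬ S ⊆ Ci := fun h => hfinotCi (h hfiS)
  have nCpA : ¬ Cp ⊆ A := fun h => h2b (hSCp.trans h)
  have nCpB : ¬ Cp ⊆ B := fun h => h4b (hSCp.trans h)
  have nACm : ¬ A ⊆ Cm := fun h => h2a (h.trans hCmS)
  have nBCm : ¬ B ⊆ Cm := fun h => h4a (h.trans hCmS)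
  -- goal memberships
  have mS : S ∈ insert S F := Finset.mem_insert_self _ _
  have mA : A ∈ insert S F := Finset.mem_insert_of_mem hA
  have mB : B ∈ insert S F := Finset.mem_insert_of_mem hB
  have mD : D ∈ insert S F := Finset.mem_insert_of_mem hD
  have mCm : Cm ∈ insert S F := Finset.mem_insert_of_mem hCmF
  have mCi : Ci ∈ insert S F := Finset.mem_insert_of_mem hCiF
  have mCp : Cp ∈ insert S F := Finset.mem_insert_of_mem hCpF
  intro W hW
  rw [Finset.mem_insert, Finset.mem_insert, Finset.mem_singleton] at hW
  rcases hDS with hDsS | hSsD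
  · -- Case II : D ⊊ S
    have hDSs : D ⊂ S := hDsS.ssubset_of_ne hDneS
    have hDCps : D ⊂ Cp := hDSs.trans hSCps
    -- II0 : B ⊆ Cp
    have II0 : B ⊆ Cp := by
      by_contra hBCp
      have hACp : ¬ A ⊆ Cp := fun h => hBCp (hBA.subset.trans h)
      exact hfree ⟨B, A, D, Cp, hB, hA, hD, hCpF, hBA, hDCps,
        h3a, h3b, hBCp, nCpB, h1a, h1b, hACp, nCpA⟩
    -- II1 : i-1 ∈ B
    have II1 : (⟨i-1, by omega⟩ : Fin n) ∈ B := by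
      obtain ⟨b, hbB, hbS⟩ := Finset.not_subset.1 h4a
      have hb1 := mem_chainC.1 (II0 hbB)
      rw [hSdef, mem_shackle] at hbS; push_neg at hbS
      have : b = (⟨i-1, by omega⟩ : Fin n) := Fin.ext (by show (b:ℕ) = i - 1; omega)
      rwa [this] at hbB
    have II1A : (⟨i-1, by omega⟩ : Fin n) ∈ A := hBA.subset II1
    -- II2 : i ∉ B
    have II2 : (⟨i, hiN⟩ : Fin n) ∉ B := by
      intro hiB
      have hiA : (⟨i, hiN⟩ : Fin n) ∈ A := hBA.subset hiB
      have nCmA : ¬ Cm ⊆ A := by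
        obtain ⟨s, hsS, hsA⟩ := Finset.not_subset.1 h2b
        intro h
        rw [hSdef, mem_shackle] at hsS
        rcases hsS with h' | h'
        · exact hsA (h (mem_chainC.2 (by omega)))
        · exact hsA ((Fin.ext h' : s = ⟨i, hiN⟩) ▸ hiA)
      have nCmB : ¬ Cm ⊆ B := by
        obtain ⟨s, hsS, hsB⟩ := Finset.not_subset.1 h4b
        intro h
        rw [hSdef, mem_shackle] at hsS
        rcases hsS with h' | h'
        · exact hsB (h (mem_chainC.2 (by omega)))
        · exact hsB ((Fin.ext h' : s = ⟨i, hiN⟩) ▸ hiB)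
      have hCmCis : Cm ⊂ Ci := hCmCi.ssubset_of_ne (fun h => hfimnotCm (h ▸ hfimCi))
      exact hfree ⟨B, A, Cm, Ci, hB, hA, hCmF, hCiF, hBA, hCmCis,
        nBCm, nCmB, (fun h => hfinotCi (h hiB)), (fun h => nCmB (hCmCi.trans h)),
        nACm, nCmA, (fun h => hfinotCi (h hiA)), (fun h => nCmA (hCmCi.trans h))⟩
    have hBCi : B ⊆ Ci := by
      intro x hx
      have hx1 := mem_chainC.1 (II0 hx)
      have hx2 : (x:ℕ) ≠ i := fun e => II2 ((Fin.ext e : x = ⟨i, hiN⟩) ▸ hx)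
      exact mem_chainC.2 (by omega)
    have hBCis : B ⊂ Ci := hBCi.ssubset_of_ne (hBne i (by omega))
    have nCmB : ¬ Cm ⊆ B := by
      intro h
      refine hBne i (by omega) (Finset.Subset.antisymm hBCi ?_)
      intro x hx
      have hx1 := mem_chainC.1 hx
      by_cases hx2 : (x:ℕ) = i - 1
      · exact (Fin.ext hx2 : x = ⟨i-1, by omega⟩) ▸ II1
      · exact h (mem_chainC.2 (by omega))
    have himD : (⟨i-1, by omega⟩ : Fin n) ∉ D := fun h => hfimnotS (hDsS h)
    -- II3 : i ∈ D
    have II3 : (⟨i, hiN⟩ : Fin n) ∈ D := by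
      by_contra hiD
      have hDCm : D ⊆ Cm := by
        intro x hx
        have hxS := hDsS hx
        rw [hSdef, mem_shackle] at hxS
        rcases hxS with h' | h'
        · exact mem_chainC.2 (by omega)
        · exact absurd ((Fin.ext h' : x = ⟨i, hiN⟩) ▸ hx) hiD
      by_cases hCmA : Cm ⊆ A
      · exact h1b (hDCm.trans hCmA)
      · have hDCms : D ⊂ Cm := hDCm.ssubset_of_ne (hDne (i-1) (by omega))
        exact hfree ⟨B, A, D, Cm, hB, hA, hD, hCmF, hBA, hDCms,
          h3a, h3b, nBCm, nCmB, h1a, h1b, nACm, hCmA⟩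
    have nDCi : ¬ D ⊆ Ci := fun h => hfinotCi (h II3)
    have nCiD : ¬ Ci ⊆ D := fun h => himD (h hfimCi)
    rcases hW with hW | hW | hW
    · -- W = A
      by_cases hCmA : Cm ⊆ A
      · have hCiA : Ci ⊆ A := by
          intro x hx
          have hx1 := mem_chainC.1 hx
          by_cases hx2 : (x:ℕ) = i - 1
          · exact (Fin.ext hx2 : x = ⟨i-1, by omega⟩) ▸ II1A
          · exact hCmA (mem_chainC.2 (by omega))
        have hCiAs : Ci ⊂ A := hCiA.ssubset_of_ne (fun h => hAne i (by omega) h.symm)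
        exact ⟨D, S, Ci, A, mD, mS, mCi, mA, hDSs, hCiAs,
          nDCi, nCiD, h1b, h1a, nSCi, nCiS, h2b, h2a,
          by simp [hW], by simp, ⟨i, Or.inl rfl, by simp [hCidef]⟩⟩
      · exact ⟨B, A, Cm, S, mB, mA, mCm, mS, hBA, hCmSs,
          nBCm, nCmB, h4a, h4b, nACm, hCmA, h2a, h2b,
          by simp [hW], by simp, ⟨i-1, Or.inr (Or.inl (by omega)), by simp [hCmdef]⟩⟩
    · -- W = B
      exact ⟨B, Ci, D, S, mB, mCi, mD, mS, hBCis, hDSs,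
        h3a, h3b, h4a, h4b, nCiD, nDCi, nCiS, nSCi,
        by simp [hW], by simp, ⟨i, Or.inl rfl, by simp [hCidef]⟩⟩
    · -- W = D
      exact ⟨B, Ci, D, S, mB, mCi, mD, mS, hBCis, hDSs,
        h3a, h3b, h4a, h4b, nCiD, nDCi, nCiS, nSCi,
        by simp [hW], by simp, ⟨i, Or.inl rfl, by simp [hCidef]⟩⟩
  · -- Case I : S ⊊ D
    have hSDs : S ⊂ D := hSsD.ssubset_of_ne (Ne.symm hDneS)
    have hiD : (⟨i, hiN⟩ : Fin n) ∈ D := hSsD hfiS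
    have nDCi : ¬ D ⊆ Ci := fun h => hfinotCi (h hiD)
    -- I1 : Cm ⊆ A
    have I1 : Cm ⊆ A := by
      by_contra hCmA
      have hCmB : ¬ Cm ⊆ B := fun h => hCmA (h.trans hBA.subset)
      have hCmDs : Cm ⊂ D := hCmSs.trans hSDs
      exact hfree ⟨B, A, Cm, D, hB, hA, hCmF, hD, hBA, hCmDs,
        nBCm, hCmB, h3a, h3b, nACm, hCmA, h1a, h1b⟩
    -- I2 : i ∉ A
    have I2 : (⟨i, hiN⟩ : Fin n) ∉ A := by
      intro hiA
      apply h2b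
      intro x hx
      rw [hSdef, mem_shackle] at hx
      rcases hx with h' | h'
      · exact I1 (mem_chainC.2 (by omega))
      · exact (Fin.ext h' : x = ⟨i, hiN⟩) ▸ hiA
    -- I3 : ¬ A ⊆ Cp
    have I3 : ¬ A ⊆ Cp := by
      intro h
      have hACi : A ⊆ Ci := by
        intro x hx
        have hx1 := mem_chainC.1 (h hx)
        have hx2 : (x:ℕ) ≠ i := fun e => I2 ((Fin.ext e : x = ⟨i, hiN⟩) ▸ hx)
        exact mem_chainC.2 (by omega)
      by_cases him : (⟨i-1, by omega⟩ : Fin n) ∈ A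
      · refine hAne i (by omega) (Finset.Subset.antisymm hACi ?_)
        intro x hx
        have hx1 := mem_chainC.1 hx
        by_cases hx2 : (x:ℕ) = i - 1
        · exact (Fin.ext hx2 : x = ⟨i-1, by omega⟩) ▸ him
        · exact I1 (mem_chainC.2 (by omega))
      · refine hAne (i-1) (by omega) (Finset.Subset.antisymm ?_ I1)
        intro x hx
        have hx1 := mem_chainC.1 (hACi hx)
        have hx2 : (x:ℕ) ≠ i - 1 := fun e => him ((Fin.ext e : x = ⟨i-1, by omega⟩) ▸ hx)
        exact mem_chainC.2 (by omega)
    -- I4 : i-1 ∈ A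
    have I4 : (⟨i-1, by omega⟩ : Fin n) ∈ A := by
      by_contra him
      have nBCi : ¬ B ⊆ Ci := by
        intro h
        obtain ⟨b, hbB, hbS⟩ := Finset.not_subset.1 h4a
        have hb1 := mem_chainC.1 (h hbB)
        rw [hSdef, mem_shackle] at hbS; push_neg at hbS
        exact him (hBA.subset ((Fin.ext (by show (b:ℕ) = i - 1; omega) : b = ⟨i-1, by omega⟩) ▸ hbB))
      have nBCp : ¬ B ⊆ Cp := by
        intro h
        obtain ⟨b, hbB, hbS⟩ := Finset.not_subset.1 h4a
        have hb1 := mem_chainC.1 (h hbB)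
        rw [hSdef, mem_shackle] at hbS; push_neg at hbS
        exact him (hBA.subset ((Fin.ext (by show (b:ℕ) = i - 1; omega) : b = ⟨i-1, by omega⟩) ▸ hbB))
      exact hfree ⟨B, A, Ci, Cp, hB, hA, hCiF, hCpF, hBA, hCiCps,
        nBCi, (fun h => him (hBA.subset (h hfimCi))), nBCp, nCpB,
        (fun h => I3 (h.trans hCiCp)), (fun h => him (h hfimCi)), I3, nCpA⟩
    have hCiA : Ci ⊆ A := by
      intro x hx
      have hx1 := mem_chainC.1 hx
      by_cases hx2 : (x:ℕ) = i - 1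
      · exact (Fin.ext hx2 : x = ⟨i-1, by omega⟩) ▸ I4
      · exact I1 (mem_chainC.2 (by omega))
    have hCiAs : Ci ⊂ A := hCiA.ssubset_of_ne (fun h => hAne i (by omega) h.symm)
    -- I5 : i-1 ∉ D
    have I5 : (⟨i-1, by omega⟩ : Fin n) ∉ D := by
      intro hmD
      have hCpD : Cp ⊆ D := by
        intro x hx
        have hx1 := mem_chainC.1 hx
        by_cases hx2 : (x:ℕ) = i
        · exact (Fin.ext hx2 : x = ⟨i, hiN⟩) ▸ hiD
        · by_cases hx3 : (x:ℕ) = i - 1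
          · exact (Fin.ext hx3 : x = ⟨i-1, by omega⟩) ▸ hmD
          · exact hSsD (mem_shackle.2 (Or.inl (by omega)))
      have hCpDs : Cp ⊂ D := hCpD.ssubset_of_ne (fun h => hDne (i+1) (by omega) h.symm)
      have nBCp : ¬ B ⊆ Cp := fun h => h3a (h.trans hCpD)
      exact hfree ⟨B, A, Cp, D, hB, hA, hCpF, hD, hBA, hCpDs,
        nBCp, nCpB, h3a, h3b, I3, nCpA, h1a, h1b⟩
    have nCiD : ¬ Ci ⊆ D := fun h => I5 (h hfimCi)
    rcases hW with hW | hW | hW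
    · -- W = A
      exact ⟨S, D, Ci, A, mS, mD, mCi, mA, hSDs, hCiAs,
        nSCi, nCiS, h2b, h2a, nDCi, nCiD, h1b, h1a,
        by simp [hW], by simp, ⟨i, Or.inl rfl, by simp [hCidef]⟩⟩
    · -- W = B
      by_cases hBCp : B ⊆ Cp
      · have hBCi : B ⊆ Ci := by
          intro x hx
          have hx1 := mem_chainC.1 (hBCp hx)
          have hx2 : (x:ℕ) ≠ i := fun e => I2 (hBA.subset ((Fin.ext e : x = ⟨i, hiN⟩) ▸ hx))
          exact mem_chainC.2 (by omega)
        have hBCis : B ⊂ Ci := hBCi.ssubset_of_ne (hBne i (by omega))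
        exact ⟨B, Ci, S, D, mB, mCi, mS, mD, hBCis, hSDs,
          h4a, h4b, h3a, h3b, nCiS, nSCi, nCiD, nDCi,
          by simp [hW], by simp, ⟨i, Or.inl rfl, by simp [hCidef]⟩⟩
      · exact ⟨B, A, S, Cp, mB, mA, mS, mCp, hBA, hSCps,
          h4a, h4b, hBCp, nCpB, h2a, h2b, I3, nCpA,
          by simp [hW], by simp, ⟨i+1, Or.inr (Or.inr rfl), by simp [hCpdef]⟩⟩
    · -- W = D
      exact ⟨S, D, Ci, A, mS, mD, mCi, mA, hSDs, hCiAs,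
        nSCi, nCiS, h2b, h2a, nDCi, nCiD, h1b, h1a,
        by simp [hW], by simp, ⟨i, Or.inl rfl, by simp [hCidef]⟩⟩
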